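/- Let A be a bounded linear operator on a complex Hilbert space H, let ω ∈ ℂ, R > 0, θ ∈ ℝ, and set σ₀ = ω + (1/R) e^{−iθ} and τ = −i e^{−iθ} (so that σ₀ − ω = iτ/R). Assume that A − ωI is invertible with ‖(A − ωI)⁻¹‖ ≤ R and that σ₀I − A is invertible. Then for every v ∈ H, Re⟨μ(σ₀, τ; A) v, v⟩ ≥ −(R/(2π)) ‖v‖²; in other words, λ_min(μ(σ₀, τ; A)) ≥ −R/(2π). -/

import Mathlib

variable {H : Type*} [NormedAddCommGroup H] [InnerProductSpace ℂ H] [CompleteSpace H]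

/-- The double layer potential kernel
`μ(σ, τ; A) = (1/(2πi)) (τ (σI − A)⁻¹ − conj(τ) (conj(σ)I − A*)⁻¹)`,
where `τ` plays the role of the unit tangent. -/
noncomputable def dlpKernel (A : H →L[ℂ] H) (σ τ : ℂ) : H →L[ℂ] H :=
  (2 * (Real.pi : ℂ) * Complex.I)⁻¹ •
    (τ • Ring.inverse (σ • (1 : H →L[ℂ] H) - A) -
      (starRingEnd ℂ τ) • Ring.inverse
        ((starRingEnd ℂ σ) • (1 : H →L[ℂ] H) - ContinuousLinearMap.adjoint A))

/-!
With `u = (σ₀ I − A)⁻¹ v` one has `Re ⟪v, μ v⟫ = Im (τ ⟪v, u⟫) / π`. Put `x = iτ u` and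
`y = R (A − ω I) u`; since `σ₀ − ω = iτ/R`, the vector `R v` equals `x − y`, while the resolvent
bound gives `‖x‖ = ‖u‖ ≤ ‖y‖`. The claim then reads `Re ⟪x − y, x⟫ ≤ ‖x − y‖² / 2`, which after
expanding the square is just `‖x‖² ≤ ‖y‖²`.
-/

open scoped InnerProductSpace

theorem re_inner_le_half_norm_sq_of_norm_le_norm_sub {𝕜 E : Type*} [RCLike 𝕜]
    [NormedAddCommGroup E] [InnerProductSpace 𝕜 E] {x z : E} (h : ‖x‖ ≤ ‖x - z‖) :
    RCLike.re ⟪z, x⟫_𝕜 ≤ ‖z‖ ^ 2 / 2 := by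
  have hsq : ‖x‖ ^ 2 ≤ ‖x - z‖ ^ 2 := pow_le_pow_left₀ (norm_nonneg x) h 2
  rw [@norm_sub_sq 𝕜, ← inner_conj_symm, RCLike.conj_re] at hsq
  linarith

theorem re_inner_dlpKernel (A : H →L[ℂ] H) (σ τ : ℂ) (v : H) :
    (⟪v, dlpKernel A σ τ v⟫_ℂ).re =
      (τ * ⟪v, Ring.inverse (σ • (1 : H →L[ℂ] H) - A) v⟫_ℂ).im / Real.pi := by
  set z := τ * ⟪v, Ring.inverse (σ • (1 : H →L[ℂ] H) - A) v⟫_ℂ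
  have hstar : (starRingEnd ℂ σ) • (1 : H →L[ℂ] H) - ContinuousLinearMap.adjoint A =
      star (σ • (1 : H →L[ℂ] H) - A) := by
    simp [star_sub, star_smul, ← ContinuousLinearMap.star_eq_adjoint]
  have hinner :
      ⟪v, dlpKernel A σ τ v⟫_ℂ = (2 * Real.pi * Complex.I)⁻¹ * (z - starRingEnd ℂ z) := by
    rw [dlpKernel, hstar, Ring.inverse_star, ContinuousLinearMap.star_eq_adjoint]
    simp only [smul_apply, sub_apply, inner_smul_right, inner_sub_right,
      ContinuousLinearMap.adjoint_inner_right, z, map_mul, inner_conj_symm]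
  rw [hinner, Complex.sub_conj]
  have hπ : (Real.pi : ℂ) ≠ 0 := Complex.ofReal_ne_zero.mpr Real.pi_ne_zero
  rw [show (2 * Real.pi * Complex.I)⁻¹ * (((2 * z.im : ℝ) : ℂ) * Complex.I) =
      ((z.im / Real.pi : ℝ) : ℂ) by push_cast; field_simp, Complex.ofReal_re]

theorem neg_half_mul_norm_sq_le_im_mul_inner {E : Type*} [NormedAddCommGroup E]
    [InnerProductSpace ℂ E] {τ : ℂ} (hτ : ‖τ‖ = 1) {R : ℝ} (hR : 0 < R) {u w : E}
    (huw : ‖u‖ ≤ R * ‖w‖) :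
    -(R / 2) * ‖(Complex.I * τ / R) • u - w‖ ^ 2 ≤
      (τ * ⟪(Complex.I * τ / R) • u - w, u⟫_ℂ).im := by
  set v := (Complex.I * τ / R) • u - w
  have hsub : (Complex.I * τ) • u - (R : ℂ) • v = (R : ℂ) • w := by
    have hR' : (R : ℂ) ≠ 0 := Complex.ofReal_ne_zero.mpr hR.ne'
    simp only [v, smul_sub, smul_smul, mul_div_cancel₀ _ hR', sub_sub_cancel]
  have hx : ‖(Complex.I * τ) • u‖ ≤ ‖(Complex.I * τ) • u - (R : ℂ) • v‖ := by
    rw [hsub, norm_smul, norm_smul, norm_mul, Complex.norm_I, hτ, Complex.norm_real,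
      Real.norm_of_nonneg hR.le]
    simpa using huw
  have key := re_inner_le_half_norm_sq_of_norm_le_norm_sub (𝕜 := ℂ) hx
  have hre : RCLike.re ⟪(R : ℂ) • v, (Complex.I * τ) • u⟫_ℂ = -R * (τ * ⟪v, u⟫_ℂ).im := by
    rw [inner_smul_left, inner_smul_right, Complex.conj_ofReal, RCLike.re_to_complex,
      Complex.re_ofReal_mul, mul_assoc, Complex.I_mul_re, mul_neg, neg_mul]
  rw [hre, norm_smul, Complex.norm_real, Real.norm_of_nonneg hR.le] at key
  nlinarith

theorem dlpKernel_lambda_min_ge_of_inverse_norm_le_general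
    (A B : H →L[ℂ] H) (ω : ℂ) (R : ℝ) (hR : 0 < R) (θ : ℝ)
    (σ₀ τ : ℂ) (hσ₀ : σ₀ = ω + (1 / R : ℝ) * Complex.exp (-θ * Complex.I))
    (hτ : τ = -Complex.I * Complex.exp (-θ * Complex.I))
    (hBA : B * (A - ω • (1 : H →L[ℂ] H)) = 1)
    (hB : ‖B‖ ≤ R)
    (hinv : IsUnit (σ₀ • (1 : H →L[ℂ] H) - A)) :
    ∀ v : H, -(R / (2 * Real.pi)) * ‖v‖ ^ 2 ≤ (inner ℂ v (dlpKernel A σ₀ τ v) : ℂ).re := by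
  intro v
  have hτ_norm : ‖τ‖ = 1 := by simp [hτ, Complex.norm_exp]
  have hσ₀τ : σ₀ = ω + Complex.I * τ / R := by
    rw [hσ₀, hτ, ← mul_assoc, mul_neg, Complex.I_mul_I, neg_neg, one_mul]
    push_cast
    ring
  set S := A - ω • (1 : H →L[ℂ] H)
  set u := Ring.inverse (σ₀ • (1 : H →L[ℂ] H) - A) v
  have hv : (Complex.I * τ / R) • u - S u = v := by
    have hTu : (σ₀ • (1 : H →L[ℂ] H) - A) u = v := by
      rw [← mul_apply_eq_comp, Ring.mul_inverse_cancel _ hinv, one_apply_eq_self]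
    rw [← hTu, hσ₀τ]
    simp only [S, sub_apply, add_smul, add_apply, smul_apply, one_apply_eq_self]
    abel
  have hu : ‖u‖ ≤ R * ‖S u‖ :=
    calc ‖u‖ = ‖B (S u)‖ := by rw [← mul_apply_eq_comp, hBA, one_apply_eq_self]
      _ ≤ ‖B‖ * ‖S u‖ := B.le_opNorm _
      _ ≤ R * ‖S u‖ := by gcongr
  have key := neg_half_mul_norm_sq_le_im_mul_inner hτ_norm hR hu
  rw [hv] at key
  rw [re_inner_dlpKernel,
    show -(R / (2 * Real.pi)) * ‖v‖ ^ 2 = -(R / 2) * ‖v‖ ^ 2 / Real.pi by ring]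
  exact div_le_div_of_nonneg_right key Real.pi_pos.le

/-- **Lemma 6.** If `A − ωI` is invertible with `‖(A − ωI)⁻¹‖ ≤ R`,
`σ₀ = ω + (1/R) e^{−iθ}` lies on the circle of center `ω` and radius `1/R`,
`τ = −i e^{−iθ}` (so `σ₀ − ω = iτ/R`), and `σ₀ I − A` is invertible, then
`λ_min(μ(σ₀, τ; A)) ≥ −R/(2π)`. -/
theorem dlpKernel_lambda_min_ge_of_inverse_norm_le
    (A B : H →L[ℂ] H) (ω : ℂ) (R : ℝ) (hR : 0 < R) (θ : ℝ)
    (σ₀ τ : ℂ) (hσ₀ : σ₀ = ω + (1 / R : ℝ) * Complex.exp (-θ * Complex.I))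
    (hτ : τ = -Complex.I * Complex.exp (-θ * Complex.I))
    (hAB : (A - ω • (1 : H →L[ℂ] H)) * B = 1) (hBA : B * (A - ω • (1 : H →L[ℂ] H)) = 1)
    (hB : ‖B‖ ≤ R)
    (hinv : IsUnit (σ₀ • (1 : H →L[ℂ] H) - A)) :
    ∀ v : H, -(R / (2 * Real.pi)) * ‖v‖ ^ 2 ≤ (inner ℂ v (dlpKernel A σ₀ τ v) : ℂ).re :=
  dlpKernel_lambda_min_ge_of_inverse_norm_le_general A B ω R hR θ σ₀ τ hσ₀ hτ hBA hB hinv
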